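/- (Birkhoff–von Neumann) Every n×n doubly stochastic matrix can be written as a convex combination of permutation matrices: there exist permutation matrices P₁,…,P_m and nonnegative coefficients a₁,…,a_m with Σ a_k = 1 such that X = Σ a_k P_k. -/
import Mathlib

open Matrix

def IsDoublyStochastic {n : Type*} [Fintype n] (A : Matrix n n ℝ) : Prop :=
  (∀ i j, 0 ≤ A i j) ∧ (∀ i, ∑ j, A i j = 1) ∧ (∀ j, ∑ i, A i j = 1)

theorem birkhoff_von_neumann {n : ℕ} (X : Matrix (Fin n) (Fin n) ℝ)
    (hX : IsDoublyStochastic X) :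
    ∃ (m : ℕ) (P : Fin m → Equiv.Perm (Fin n)) (a : Fin m → ℝ),
      (∀ k, 0 ≤ a k) ∧ (∑ k, a k = 1) ∧ X = ∑ k, a k • (P k).permMatrix ℝ := by
  have hX' : X ∈ doublyStochastic ℝ (Fin n) := by
    rw [mem_doublyStochastic_iff_sum]
    exact hX
  obtain ⟨w, hw0, hw1, hw2⟩ := exists_eq_sum_perm_of_mem_doublyStochastic hX'
  let e := (Fintype.equivFin (Equiv.Perm (Fin n))).symm
  refine ⟨Fintype.card (Equiv.Perm (Fin n)), e, fun k => w (e k), fun k => hw0 _, ?_, ?_⟩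
  · rw [Equiv.sum_comp e w]; exact hw1
  · rw [Equiv.sum_comp e (fun σ => w σ • σ.permMatrix ℝ)]; exact hw2.symm
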